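/- arXiv:1506.06275 — 2 statements merged into one kernel-verified Lean document; each statement's English description precedes it below -/
import Mathlib

section
/- Last-use opacity does not support overwriting: for every prefix-closed set 𝓔 of histories, no history H ∈ 𝓔 that is last-use opaque with respect to 𝓔 contains transactions T_i and T_j such that T_i releases some variable x early in H, H|T_i contains write executions w_i(x,v)→ok_i and w_i(x,v')→ok_i with the former preceding the latter in H|T_i, and H|T_j contains a read execution r_j(x)→v that precedes w_i(x,v')→ok_i in H. -/
/-!
Formal model of transactional memory (TM) histories, following Siek &
Wojciechowski, "Last-use Opacity: A Strong Safety Property for Transactional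
Memory with Early Release Support".

Transactions and shared variables are indexed by natural numbers; values of
variables are natural numbers with initial value 0.
-/

namespace TM

open Classical

/-- Transactional operations: `init`, read of a variable, write of a value to
a variable, `tryCommit` and `tryAbort`. -/
inductive Op : Type
  | init : Op
  | read : ℕ → Op
  | write : ℕ → ℕ → Op
  | tryCommit : Op
  | tryAbort : Op
  deriving DecidableEq

/-- Responses: `ok`, a value (for reads), commit `C_i`, abort `A_i`. -/
inductive Resp : Type
  | ok : Resp
  | value : ℕ → Resp
  | committed : Resp
  | aborted : Resp
  deriving DecidableEq

/-- Invocation and response events, tagged with the transaction executing them. -/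
inductive Event : Type
  | inv : ℕ → Op → Event
  | res : ℕ → Resp → Event
  deriving DecidableEq

/-- The transaction executing an event. -/
def Event.txn : Event → ℕ
  | .inv t _ => t
  | .res t _ => t

/-- A history is a finite sequence of events. -/
abbrev History := List Event

/-- `proj i H` is `H|T_i`, the subsequence of events of transaction `i`. -/
def proj (i : ℕ) (H : History) : History :=
  H.filter (fun e => e.txn == i)

/-- Transaction `i` is in `H` (`H|T_i ≠ ∅`). -/
def inTxn (H : History) (i : ℕ) : Prop := proj i H ≠ []

/-- `T_i` is committed in `H`: `H|T_i` contains `tryC_i → C_i`. -/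
def committed (H : History) (i : ℕ) : Prop :=
  List.Sublist [Event.inv i Op.tryCommit, Event.res i Resp.committed] (proj i H)

/-- `T_i` is aborted in `H`: `H|T_i` contains a response `A_i`. -/
def aborted (H : History) (i : ℕ) : Prop :=
  Event.res i Resp.aborted ∈ proj i H

/-- `T_i` is commit-pending in `H`. -/
def commitPending (H : History) (i : ℕ) : Prop :=
  Event.inv i Op.tryCommit ∈ proj i H ∧
    Event.res i Resp.committed ∉ proj i H ∧ Event.res i Resp.aborted ∉ proj i H

/-- `T_i` is live in `H`. -/
def live (H : History) (i : ℕ) : Prop :=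
  inTxn H i ∧ ¬ committed H i ∧ ¬ aborted H i ∧ ¬ commitPending H i

/-- A complete operation execution by transaction `i` in `H`: the invocation
is at position `ki`, its matching response at position `kr` (no events of `i`
in between). -/
def opExec (H : History) (i ki kr : ℕ) (o : Op) (r : Resp) : Prop :=
  ki < kr ∧ H[ki]? = some (Event.inv i o) ∧ H[kr]? = some (Event.res i r) ∧
    ∀ (m : ℕ) (e : Event), ki < m → m < kr → H[m]? = some e → e.txn ≠ i

def isInvEvent : Event → Prop
  | .inv _ _ => True
  | .res _ _ => False

def isResEvent : Event → Prop
  | .inv _ _ => False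
  | .res _ _ => True

/-- Well-formedness of `H|T_i` (as the list `L`): alternation of invocations
and responses starting with `init_i`, no events after a commit/abort response,
and no invocation after an invocation of `tryC_i` or `tryA_i`. -/
def wellFormedTxn (L : History) (i : ℕ) : Prop :=
  (∀ (k : ℕ) (e : Event), L[k]? = some e →
      ((k % 2 = 0 → isInvEvent e) ∧ (k % 2 = 1 → isResEvent e))) ∧
  (L ≠ [] → L[0]? = some (Event.inv i Op.init)) ∧
  (∀ k : ℕ, (L[k]? = some (Event.res i Resp.committed) ∨
      L[k]? = some (Event.res i Resp.aborted)) → L.length = k + 1) ∧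
  (∀ (k : ℕ) (o : Op), L[k]? = some (Event.inv i o) → (o = Op.tryCommit ∨ o = Op.tryAbort) →
      ∀ (m : ℕ) (o' : Op), L[m]? = some (Event.inv i o') → m ≤ k)

/-- A well-formed history. -/
def wellFormed (H : History) : Prop :=
  ∀ i : ℕ, wellFormedTxn (proj i H) i

/-- Unique writes: distinct write executions write distinct values, all
different from the initial value 0. -/
def uniqueWrites (H : History) : Prop :=
  ∀ (k1 k2 i1 i2 x1 x2 v1 v2 : ℕ),
    H[k1]? = some (Event.inv i1 (Op.write x1 v1)) →
    H[k2]? = some (Event.inv i2 (Op.write x2 v2)) →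
    v1 ≠ 0 ∧ (k1 ≠ k2 → v1 ≠ v2)

/-- Two histories are equivalent if they agree on every `H|T_i`. -/
def equivH (H1 H2 : History) : Prop := ∀ i : ℕ, proj i H1 = proj i H2

/-- Real-time precedence: the last event of `H|T_i` precedes the first event
of `H|T_j` in `H`. -/
def rtPrec (H : History) (i j : ℕ) : Prop :=
  ∃ k l : ℕ, k < l ∧
    (∃ e : Event, H[k]? = some e ∧ e.txn = i) ∧
    (∃ e : Event, H[l]? = some e ∧ e.txn = j) ∧
    (∀ (m : ℕ) (e : Event), H[m]? = some e → e.txn = i → m ≤ k) ∧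
    (∀ (m : ℕ) (e : Event), H[m]? = some e → e.txn = j → l ≤ m)

/-- `S` preserves the real-time order of `H`. -/
def preservesRT (H S : History) : Prop := ∀ i j : ℕ, rtPrec H i j → rtPrec S i j

/-- A sequential history: any two distinct transactions are comparable in the
real-time order. -/
def sequential (S : History) : Prop :=
  ∀ i j : ℕ, inTxn S i → inTxn S j → i ≠ j → rtPrec S i j ∨ rtPrec S j i

/-- The read of value `v` on variable `x` invoked at position `ki` is
consistent with the sequential specification of `x`: the latest write to `x`
completed before it writes `v`, or there is no such write and `v = 0`. -/
def readsLegally (S : History) (x v ki : ℕ) : Prop :=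
  (∃ j kwi kwr : ℕ, kwr < ki ∧ opExec S j kwi kwr (Op.write x v) Resp.ok ∧
      ∀ j' v' kwi' kwr' : ℕ,
        opExec S j' kwi' kwr' (Op.write x v') Resp.ok → kwr' < ki → kwr' ≤ kwr)
  ∨ (v = 0 ∧ ∀ j v' kwi kwr : ℕ, opExec S j kwi kwr (Op.write x v') Resp.ok → ¬ kwr < ki)

/-- A (sequential) history is legal if its restriction to every variable is in
the variable's sequential specification, i.e. every complete read is
consistent with the latest preceding write. -/
def isLegal (S : History) : Prop :=
  ∀ i x v ki kr : ℕ, opExec S i ki kr (Op.read x) (Resp.value v) → readsLegally S x v ki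

/-- Transaction `i` has the pending (unanswered) invocation of `o` in `H`. -/
def pendingInv (H : History) (i : ℕ) (o : Op) : Prop :=
  (proj i H).getLast? = some (Event.inv i o)

/-- `C` is a completion `Compl(H)` of `H`. -/
def isCompletion (H C : History) : Prop :=
  H <+: C ∧
  (∀ i : ℕ, inTxn C i → inTxn H i) ∧
  (∀ i : ℕ, inTxn C i → committed C i ∨ aborted C i) ∧
  ∀ i : ℕ, inTxn H i →
    ((committed H i ∨ aborted H i) → proj i C = proj i H) ∧
    (¬ committed H i → ¬ aborted H i →
      (pendingInv H i Op.tryCommit →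
          proj i C = proj i H ++ [Event.res i Resp.committed]) ∧
      ((∃ o : Op, o ≠ Op.tryCommit ∧ pendingInv H i o) →
          proj i C = proj i H ++ [Event.res i Resp.aborted]) ∧
      ((¬ ∃ o : Op, pendingInv H i o) →
          proj i C = proj i H ++ [Event.inv i Op.tryCommit, Event.res i Resp.aborted]))

/-- Restriction of a history to the events of a set of transactions. -/
noncomputable def restrictTxns (S : History) (T : Set ℕ) : History :=
  S.filter (fun e => decide (e.txn ∈ T))

/-- `Vis(S,T_i)`: the longest subhistory of `S` containing, for each `T_j` in
`S`, the events of `T_j` iff `j = i` or (`T_j` is committed and `T_j ≺_S T_i`). -/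
noncomputable def Vis (S : History) (i : ℕ) : History :=
  restrictTxns S {j | j = i ∨ (committed S j ∧ rtPrec S j i)}

/-- `T_i` is legal in `S` if `Vis(S,T_i)` is legal. -/
def legalIn (S : History) (i : ℕ) : Prop := isLegal (Vis S i)

/-- Serializability. -/
def serializable (H : History) : Prop :=
  ∃ C S : History, isCompletion H C ∧ sequential S ∧ equivH S C ∧
    ∀ i : ℕ, inTxn S i → committed S i → legalIn S i

/-- The read invoked at position `ki` by `T_j` on `x` is non-local: no write
to `x` by `T_j` precedes it. -/
def nonLocalReadAt (H : History) (j x ki : ℕ) : Prop :=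
  ∀ m v : ℕ, m < ki → H[m]? ≠ some (Event.inv j (Op.write x v))

/-- `T_i` releases variable `x` early in `H`. -/
def releasesEarly (H : History) (i x : ℕ) : Prop :=
  ∃ P : History, P <+: H ∧ live P i ∧
    ∃ j v wki wkr rki rkr : ℕ, j ≠ i ∧
      opExec P i wki wkr (Op.write x v) Resp.ok ∧
      opExec P j rki rkr (Op.read x) (Resp.value v) ∧
      nonLocalReadAt P j x rki ∧
      wkr < rki

/-- Overwriting by `T_i` observed by `T_j` on variable `x` in `H`. -/
def overwriting (H : History) (i j x : ℕ) : Prop :=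
  i ≠ j ∧ releasesEarly H i x ∧
  ∃ v v' k1i k1r k2i k2r kri krr : ℕ,
    opExec H i k1i k1r (Op.write x v) Resp.ok ∧
    opExec H i k2i k2r (Op.write x v') Resp.ok ∧ k1r < k2i ∧
    opExec H j kri krr (Op.read x) (Resp.value v) ∧ krr < k2i

/-- Final-state opacity. -/
def finalStateOpaque (H : History) : Prop :=
  ∃ C S : History, isCompletion H C ∧ sequential S ∧ equivH S C ∧ preservesRT H S ∧
    ∀ i : ℕ, inTxn S i → legalIn S i

/-- Opacity: every finite prefix is final-state opaque. -/
def isOpaque (H : History) : Prop := ∀ P : History, P <+: H → finalStateOpaque P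

/-- Causal past of `T_i` in `H`: `T_i` together with the committed or aborted
transactions that precede `T_i` in `H`. -/
def causalPast (H : History) (i : ℕ) : Set ℕ :=
  {j | j = i ∨ ((committed H j ∨ aborted H j) ∧ rtPrec H j i)}

/-- Virtual world consistency. -/
def VWC (H : History) : Prop :=
  (∃ S : History, sequential S ∧ equivH S (restrictTxns H {j | committed H j}) ∧
      preservesRT H S ∧ ∀ j : ℕ, inTxn S j → committed S j → legalIn S j) ∧
  (∀ i : ℕ, inTxn H i → aborted H i →
      ∃ S : History, sequential S ∧ equivH S (restrictTxns H (causalPast H i)) ∧ isLegal S)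

/-! ### Live opacity -/

/-- Index `k` of `L` carries (part of) a read operation execution. -/
def isReadIdx (L : History) (k : ℕ) : Prop :=
  (∃ t x : ℕ, L[k]? = some (Event.inv t (Op.read x))) ∨
  (1 ≤ k ∧ (∃ t x : ℕ, L[k-1]? = some (Event.inv t (Op.read x))) ∧
    ∃ (t : ℕ) (r : Resp), L[k]? = some (Event.res t r))

/-- Index `k` of `L` carries (part of) a non-local read operation execution. -/
def isNonLocalReadIdx (L : History) (k : ℕ) : Prop :=
  (∃ t x : ℕ, L[k]? = some (Event.inv t (Op.read x)) ∧
      ∀ m t' v : ℕ, m < k → L[m]? ≠ some (Event.inv t' (Op.write x v))) ∨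
  (1 ≤ k ∧ (∃ (t : ℕ) (r : Resp), L[k]? = some (Event.res t r)) ∧
    ∃ t x : ℕ, L[k-1]? = some (Event.inv t (Op.read x)) ∧
      ∀ m t' v : ℕ, m < k - 1 → L[m]? ≠ some (Event.inv t' (Op.write x v)))

/-- The subsequence of `L` of events at indices satisfying `p`. -/
noncomputable def seqOfIdx (L : History) (p : ℕ → Prop) : History :=
  ((List.range L.length).filter (fun k => decide (p k))).filterMap (fun k => L[k]?)

/-- `H|(T_i,r)`: the read operation executions of `T_i`, excluding the last
read if its response is `A_i`. -/
noncomputable def readSeq (H : History) (i : ℕ) : History :=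
  let L := proj i H
  let R := seqOfIdx L (isReadIdx L)
  if R.getLast? = some (Event.res i Resp.aborted) then R.dropLast.dropLast else R

/-- `H|(T_i,gr)`: the non-local read operation executions of `T_i`, excluding
the last read if its response is `A_i`. -/
noncomputable def grSeq (H : History) (i : ℕ) : History :=
  let L := proj i H
  let R := seqOfIdx L (isNonLocalReadIdx L)
  if R.getLast? = some (Event.res i Resp.aborted) then R.dropLast.dropLast else R

/-- The transaction `T_i^gr`. -/
noncomputable def grTxn (H : History) (i : ℕ) : History :=
  if grSeq H i = [] then []
  else [Event.inv i Op.init, Event.res i Resp.ok] ++ grSeq H i ++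
       [Event.inv i Op.tryCommit, Event.res i Resp.committed]

/-- `S` justifies the serializability of `H`. -/
def justifiesSer (S H : History) : Prop :=
  ∃ H' : History, List.Sublist H' H ∧ (∀ e ∈ H', committed H e.txn) ∧
    (∀ j : ℕ, committed H j → proj j H' = proj j H) ∧
    isLegal S ∧ equivH S H'

/-- All complete local reads of `T_i` in `H` have legal responses: the last
preceding write of `T_i` to the variable wrote the value read. -/
def localReadsLegal (H : History) (i : ℕ) : Prop :=
  ∀ x v ki kr : ℕ, opExec (proj i H) i ki kr (Op.read x) (Resp.value v) →
    (∃ m w : ℕ, m < ki ∧ (proj i H)[m]? = some (Event.inv i (Op.write x w))) →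
    ∃ m : ℕ, m < ki ∧ (proj i H)[m]? = some (Event.inv i (Op.write x v)) ∧
      ∀ m' w' : ℕ, m < m' → m' < ki → (proj i H)[m']? ≠ some (Event.inv i (Op.write x w'))

/-- Live opacity. -/
def liveOpaque (H : History) : Prop :=
  ∃ S : History, sequential S ∧ preservesRT H S ∧ justifiesSer S H ∧
    (∃ S' : History, sequential S' ∧ List.Sublist S S' ∧
      (∀ i : ℕ, inTxn H i → ¬ inTxn S i → proj i S' = grTxn H i) ∧
      (∀ i j : ℕ, rtPrec H i j → inTxn S' i → inTxn S' j → rtPrec S' i j) ∧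
      isLegal S') ∧
    (∀ i : ℕ, inTxn H i → ¬ inTxn S i → localReadsLegal H i)

/-! ### Last-use opacity -/

/-- A prefix-closed set of histories (the possible histories of a program). -/
def prefixClosed (E : Set History) : Prop :=
  ∀ H ∈ E, ∀ P : History, P <+: H → P ∈ E

/-- The write execution on `x` by `T_i` at positions `(ki,kr)` is the closing
("last") write on `x` by `T_i` in `H` with respect to the possible histories
`E`: in no extension of `H` in `E` does `T_i` invoke another write on `x`
after it. -/
def closingWrite (E : Set History) (H : History) (i x v ki kr : ℕ) : Prop :=
  opExec H i ki kr (Op.write x v) Resp.ok ∧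
  ∀ H' ∈ E, H <+: H' → ∀ m v' : ℕ, H'[m]? = some (Event.inv i (Op.write x v')) → m ≤ ki

/-- `T_i` decided on `x` in `H` (w.r.t. `E`). -/
def decidedOn (E : Set History) (H : History) (i x : ℕ) : Prop :=
  ∃ v ki kr : ℕ, closingWrite E H i x v ki kr

/-- The variable accessed by an operation. -/
def opVar : Op → Option ℕ
  | .read x => some x
  | .write x _ => some x
  | _ => none

/-- The variable accessed by the event at index `k` of `L` (for a response,
the variable of the matching invocation at `k-1`). -/
def eventVarAt (L : History) (k : ℕ) : Option ℕ :=
  match L[k]? with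
  | some (Event.inv _ o) => opVar o
  | some (Event.res _ _) =>
      match L[k-1]? with
      | some (Event.inv _ o) => opVar o
      | _ => none
  | none => none

/-- The operation execution starting at index `k` of `L` is complete. -/
def completeAt (L : History) (k : ℕ) : Prop :=
  ∀ (t : ℕ) (o : Op), L[k]? = some (Event.inv t o) →
    ∃ (t' : ℕ) (r : Resp), L[k+1]? = some (Event.res t' r)

/-- `Hs⌊T_i` (decided transaction subhistory): the subsequence of `Hs|T_i`
consisting of `init_i` and all complete operation executions on variables on
which `T_i` decided (decidedness judged in `Hd` w.r.t. `E`). -/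
noncomputable def lastUseProj (E : Set History) (Hd Hs : History) (i : ℕ) : History :=
  let L := proj i Hs
  seqOfIdx L (fun k => completeAt L k ∧
    (k ≤ 1 ∨ ∃ x : ℕ, eventVarAt L k = some x ∧ decidedOn E Hd i x))

/-- `Hs⌊^T_i = Hs⌊T_i · [tryC_i → C_i]`. -/
noncomputable def lastUseProjC (E : Set History) (Hd Hs : History) (i : ℕ) : History :=
  lastUseProj E Hd Hs i ++ [Event.inv i Op.tryCommit, Event.res i Resp.committed]

/-- Transactions of a history in order of first occurrence. -/
def txnOrder : History → List ℕ
  | [] => []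
  | e :: t => e.txn :: (txnOrder t).filter (fun j => j ≠ e.txn)

/-- The candidate `LUVis(S,T_i)` determined by a choice `inc` of which decided
non-committed transactions to include: for each transaction `j` of `S` in
order, all of `S|T_j` if `j = i` or `T_j` is committed in `S` and `T_j ≺_S T_i`;
`S⌊^T_j` if `T_j` is non-committed, decided on some variable in `H`,
`T_j ≺_S T_i`, not `T_j ≺_H T_i`, and `inc j` holds; nothing otherwise. -/
noncomputable def buildLUVis (E : Set History) (H S : History) (i : ℕ)
    (inc : ℕ → Prop) : History :=
  (txnOrder S).flatMap (fun j =>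
    if j = i ∨ (committed S j ∧ rtPrec S j i) then proj j S
    else if ¬ committed S j ∧ (∃ x : ℕ, decidedOn E H j x) ∧ rtPrec S j i ∧
        ¬ rtPrec H j i ∧ inc j
      then lastUseProjC E H S j
    else [])

/-- `T_i` is last-use legal in `S`: some admissible `LUVis(S,T_i)` is legal. -/
def lastUseLegal (E : Set History) (H S : History) (i : ℕ) : Prop :=
  ∃ inc : ℕ → Prop, isLegal (buildLUVis E H S i inc)

/-- Final-state last-use opacity with respect to `E`. -/
def finalStateLUOpaque (E : Set History) (H : History) : Prop :=
  ∃ C S : History, isCompletion H C ∧ sequential S ∧ equivH S C ∧ preservesRT H S ∧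
    (∀ i : ℕ, inTxn S i → committed S i → legalIn S i) ∧
    (∀ i : ℕ, inTxn S i → ¬ committed S i → lastUseLegal E H S i)

/-- Last-use opacity with respect to `E`: every finite prefix is final-state
last-use opaque with respect to `E`. -/
def lastUseOpaque (E : Set History) (H : History) : Prop :=
  ∀ P : History, P <+: H → finalStateLUOpaque E P

/-! ### Database conditions -/

/-- `T_j` reads from `T_i` in `H` (unique writes). -/
def readsFrom (H : History) (j i : ℕ) : Prop :=
  ∃ x v kwi kwr kri krr : ℕ,
    opExec H i kwi kwr (Op.write x v) Resp.ok ∧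
    opExec H j kri krr (Op.read x) (Resp.value v)

/-- Recoverability: if `T_j` reads from `T_i` then `T_i` commits before `T_j`
commits. -/
def recoverable (H : History) : Prop :=
  ∀ i j : ℕ, i ≠ j → readsFrom H j i →
    ∀ kc' : ℕ, H[kc']? = some (Event.res j Resp.committed) →
      ∃ kc : ℕ, kc < kc' ∧ H[kc]? = some (Event.res i Resp.committed)

/-- Avoiding cascading aborts: whenever `T_j` reads `x` from `T_i`, the commit
response `C_i` precedes the read. -/
def ACA (H : History) : Prop :=
  ∀ i j x v kwi kwr kri krr : ℕ, i ≠ j →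
    opExec H i kwi kwr (Op.write x v) Resp.ok →
    opExec H j kri krr (Op.read x) (Resp.value v) →
    ∃ m : ℕ, m < kri ∧ H[m]? = some (Event.res i Resp.committed)

/-- Strictness. -/
def strictH (H : History) : Prop :=
  ∀ i j : ℕ, i ≠ j → ∀ x v v' ki kr kwi kwr : ℕ,
    (opExec H i ki kr (Op.read x) (Resp.value v) ∨ opExec H i ki kr (Op.write x v') Resp.ok) →
    opExec H j kwi kwr (Op.write x v) Resp.ok →
    kwr < ki →
    ∃ m : ℕ, m < ki ∧
      (H[m]? = some (Event.res j Resp.committed) ∨ H[m]? = some (Event.res j Resp.aborted))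

end TM

/-!
Cut `H` just before the second write `w_i(x,v')` and take a witness `S` for that prefix. There
`T_i` has neither invoked `tryC_i` nor committed (it still has an operation to invoke), so its
completion aborts it and it is not committed in `S`; and since `T_i` writes `x` again later, it
has not decided on `x`, so its writes to `x` are not part of `S⌊^T_i`. Hence neither `Vis(S,T_j)`
nor any admissible `LUVis(S,T_j)` contains `w_i(x,v)`, which by unique writes is the only write of
`v ≠ 0`, and the read `r_j(x) → v` cannot be legal.
-/

namespace List

variable {α : Type*}

theorem IsPrefix.getElem?_eq_some {l₁ l₂ : List α} {k : ℕ} {a : α} (h : l₁ <+: l₂)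
    (hk : l₁[k]? = some a) : l₂[k]? = some a := by
  obtain ⟨t, rfl⟩ := h
  rwa [getElem?_append_left (getElem?_eq_some_iff.mp hk).1]

theorem getElem?_eq_some_of_append_of_not_mem {l₁ l₂ : List α} {k : ℕ} {a : α}
    (hk : (l₁ ++ l₂)[k]? = some a) (ha : a ∉ l₂) : l₁[k]? = some a := by
  rw [getElem?_append] at hk
  split_ifs at hk
  · exact hk
  · exact absurd (mem_of_getElem? hk) ha

theorem flatMap_eq_of_nodup {β : Type*} {l : List α} {g : α → List β} {j : α} (hl : l.Nodup)
    (hj : j ∈ l) (hg : ∀ t ∈ l, t ≠ j → g t = []) : l.flatMap g = g j := by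
  induction l with
  | nil => simp at hj
  | cons a l ih =>
    obtain ⟨ha, hl⟩ := nodup_cons.mp hl
    have hg' : ∀ t ∈ l, t ≠ j → g t = [] := fun t ht => hg t (mem_cons_of_mem a ht)
    rw [flatMap_cons]
    rcases mem_cons.mp hj with rfl | hj
    · rw [flatMap_eq_nil_iff.mpr fun t ht => hg' t ht fun h => ha (h ▸ ht), append_nil]
    · rw [hg a mem_cons_self fun h => ha (h ▸ hj), nil_append, ih hl hj hg']

theorem pair_infix_filter_of_getElem? {p : α → Bool} {l : List α} {x y : α} {a b : ℕ}
    (hab : a < b) (ha : l[a]? = some x) (hb : l[b]? = some y) (hx : p x) (hy : p y)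
    (hgap : ∀ (m : ℕ) (e : α), a < m → m < b → l[m]? = some e → p e = false) :
    [x, y] <:+: l.filter p := by
  obtain ⟨ha', hxa⟩ := getElem?_eq_some_iff.mp ha
  obtain ⟨hb', hyb⟩ := getElem?_eq_some_iff.mp hb
  set gap := (l.drop (a + 1)).take (b - a - 1)
  have hsplit : l = l.take a ++ x :: (gap ++ y :: l.drop (b + 1)) := by
    have h : (l.drop (a + 1)).drop (b - a - 1) = l.drop b := by
      rw [drop_drop]; congr 1; omega
    rw [← hxa, ← hyb, ← drop_eq_getElem_cons hb', ← h, take_append_drop,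
      ← drop_eq_getElem_cons ha', take_append_drop]
  have hgap' : gap.filter p = [] := by
    refine filter_eq_nil_iff.mpr fun e he => ?_
    obtain ⟨k, hk⟩ := mem_iff_getElem?.mp he
    have hk' : k < b - a - 1 := by
      have := (getElem?_eq_some_iff.mp hk).1
      simp only [gap, length_take] at this
      omega
    simp only [gap, getElem?_take, if_pos hk', getElem?_drop] at hk
    simpa using hgap _ e (by omega) (by omega) hk
  refine ⟨(l.take a).filter p, (l.drop (b + 1)).filter p, ?_⟩
  conv_rhs => rw [hsplit]
  simp [filter_append, hx, hy, hgap']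

theorem exists_getElem?_of_pair_infix_filter {p : α → Bool} {l : List α} {x y : α}
    (h : [x, y] <:+: l.filter p) :
    ∃ a b, a < b ∧ l[a]? = some x ∧ l[b]? = some y ∧
      ∀ (m : ℕ) (e : α), a < m → m < b → l[m]? = some e → p e = false := by
  obtain ⟨s, t, hst⟩ := h
  simp only [append_assoc, cons_append, nil_append] at hst
  obtain ⟨l₁, l₂, rfl, -, h₂⟩ := append_eq_filter_iff.mp hst
  obtain ⟨m₁, l₃, rfl, -, -, h₃⟩ := filter_eq_cons_iff.mp h₂
  obtain ⟨m₂, l₄, rfl, hm₂, -, -⟩ := filter_eq_cons_iff.mp h₃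
  rw [← append_assoc]
  refine ⟨(l₁ ++ m₁).length, (l₁ ++ m₁).length + (m₂.length + 1), by omega, ?_, ?_, ?_⟩
  · simp
  · rw [getElem?_append_right (by omega), Nat.add_sub_cancel_left]
    simp
  · intro m e h1 h2 he
    obtain ⟨k, hk⟩ : ∃ k, m - (l₁ ++ m₁).length = k + 1 := ⟨m - (l₁ ++ m₁).length - 1, by omega⟩
    rw [getElem?_append_right (by omega), hk, getElem?_cons_succ,
      getElem?_append_left (by omega)] at he
    simpa using hm₂ e (mem_of_getElem? he)

end List

namespace TM

@[simp]
lemma mem_proj {i : ℕ} {L : History} {e : Event} : e ∈ proj i L ↔ e ∈ L ∧ e.txn = i := by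
  simp [proj]

lemma proj_take_append_prefix {H : History} {n : ℕ} {e : Event} (hn : H[n]? = some e) :
    proj e.txn (H.take n) ++ [e] <+: proj e.txn H := by
  have h := (List.take_prefix (n + 1) H).filter (fun e' => e'.txn == e.txn)
  rwa [List.take_add_one, hn, Option.toList_some, List.filter_append,
    List.filter_singleton, beq_self_eq_true, cond_true] at h

lemma mem_txnOrder_of_mem {L : History} {e : Event} (he : e ∈ L) : e.txn ∈ txnOrder L := by
  induction L with
  | nil => simp at he
  | cons e' L ih =>
    rw [txnOrder]
    by_cases h : e.txn = e'.txn
    · exact h ▸ List.mem_cons_self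
    · rcases List.mem_cons.mp he with rfl | he
      · exact absurd rfl h
      · exact List.mem_cons_of_mem _ (List.mem_filter.mpr ⟨ih he, by simpa using h⟩)

lemma txnOrder_nodup (L : History) : (txnOrder L).Nodup := by
  induction L with
  | nil => exact List.nodup_nil
  | cons e L ih =>
    exact List.nodup_cons.mpr ⟨fun h => by simpa using List.of_mem_filter h, ih.filter _⟩

lemma exists_opExec_iff_infix_proj {L : History} {t : ℕ} {o : Op} {r : Resp} :
    (∃ a b, opExec L t a b o r) ↔ [Event.inv t o, Event.res t r] <:+: proj t L := by
  constructor
  · rintro ⟨a, b, hab, ha, hb, hgap⟩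
    exact List.pair_infix_filter_of_getElem? hab ha hb (by simp [Event.txn]) (by simp [Event.txn])
      fun m e h1 h2 he => by simpa using hgap m e h1 h2 he
  · intro h
    obtain ⟨a, b, hab, ha, hb, hgap⟩ := List.exists_getElem?_of_pair_infix_filter h
    exact ⟨a, b, hab, ha, hb, fun m e h1 h2 he => by simpa using hgap m e h1 h2 he⟩

lemma opExec.take {H : History} {t a b n : ℕ} {o : Op} {r : Resp} (h : opExec H t a b o r)
    (hb : b < n) : opExec (H.take n) t a b o r := by
  obtain ⟨hab, ha, hb', hgap⟩ := h
  refine ⟨hab, ?_, ?_, fun m e h1 h2 he =>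
    hgap m e h1 h2 ((List.take_prefix n H).getElem?_eq_some he)⟩
  · rwa [List.getElem?_take, if_pos (by omega)]
  · rwa [List.getElem?_take, if_pos hb]

lemma isLegal.exists_write_of_read {W : History} {j x v : ℕ} (hW : isLegal W) (hv : v ≠ 0)
    (h : [Event.inv j (Op.read x), Event.res j (Resp.value v)] <:+: proj j W) :
    ∃ t, Event.inv t (Op.write x v) ∈ W := by
  obtain ⟨a, b, hop⟩ := exists_opExec_iff_infix_proj.mpr h
  rcases hW j x v a b hop with ⟨t, _, _, -, hw, -⟩ | ⟨hv0, -⟩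
  · exact ⟨t, List.mem_of_getElem? hw.2.1⟩
  · exact absurd hv0 hv

lemma uniqueWrites.txn_eq {H : History} {i t x v k : ℕ} (huw : uniqueWrites H)
    (hk : H[k]? = some (Event.inv i (Op.write x v)))
    (ht : Event.inv t (Op.write x v) ∈ H) : t = i := by
  obtain ⟨k', hk'⟩ := List.mem_iff_getElem?.mp ht
  by_cases hkk : k' = k
  · subst hkk
    simpa using hk'.symm.trans hk
  · exact absurd rfl ((huw k' k t i x x v v hk' hk).2 hkk)

lemma wellFormedTxn.two_le_of_getElem?_eq_write {L : History} {i t x v k : ℕ}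
    (hL : wellFormedTxn L i) (hk : L[k]? = some (Event.inv t (Op.write x v))) : 2 ≤ k := by
  by_contra! hk2
  interval_cases k
  · rw [hL.2.1 (List.ne_nil_of_mem (List.mem_of_getElem? hk))] at hk
    simp at hk
  · exact (hL.1 1 _ hk).2 rfl

lemma wellFormedTxn.not_mem_of_append_inv_prefix {L L' : History} {i : ℕ} {o : Op}
    (hL : wellFormedTxn L i) (h : L' ++ [Event.inv i o] <+: L) :
    Event.inv i Op.tryCommit ∉ L' ∧ Event.res i Resp.committed ∉ L' := by
  have hnext : L[L'.length]? = some (Event.inv i o) := h.getElem?_eq_some (by simp)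
  have hlen := (List.getElem?_eq_some_iff.mp hnext).1
  have hL' : L' <+: L := (List.prefix_append _ _).trans h
  constructor
  · intro hc
    obtain ⟨k, hk⟩ := List.mem_iff_getElem?.mp hc
    have := hL.2.2.2 k Op.tryCommit (hL'.getElem?_eq_some hk) (Or.inl rfl) _ o hnext
    have := (List.getElem?_eq_some_iff.mp hk).1
    omega
  · intro hc
    obtain ⟨k, hk⟩ := List.mem_iff_getElem?.mp hc
    have := hL.2.2.1 k (Or.inl (hL'.getElem?_eq_some hk))
    have := (List.getElem?_eq_some_iff.mp hk).1
    omega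

lemma isCompletion.exists_proj_eq_append {P C : History} (hC : isCompletion P C) (i : ℕ) :
    ∃ s, proj i C = proj i P ++ s ∧
      s ⊆ [Event.inv i Op.tryCommit, Event.res i Resp.committed, Event.res i Resp.aborted] ∧
      (Event.res i Resp.committed ∈ s → Event.inv i Op.tryCommit ∈ proj i P) := by
  by_cases hP : inTxn P i
  swap
  · have hC' : proj i C = [] := by_contra fun h => hP (hC.2.1 i h)
    exact ⟨[], by rw [hC', not_not.mp hP, List.append_nil], by simp, by simp⟩
  obtain ⟨hdone, hlive⟩ := hC.2.2.2 i hP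
  by_cases hca : committed P i ∨ aborted P i
  · exact ⟨[], by rw [hdone hca, List.append_nil], by simp, by simp⟩
  obtain ⟨hpc, hpo, hnone⟩ := hlive (fun h => hca (Or.inl h)) (fun h => hca (Or.inr h))
  by_cases htc : pendingInv P i Op.tryCommit
  · exact ⟨_, hpc htc, by simp, fun _ => List.mem_of_getLast? htc⟩
  by_cases ho : ∃ o, pendingInv P i o
  · obtain ⟨o, ho⟩ := ho
    exact ⟨_, hpo ⟨o, fun h => htc (h ▸ ho), ho⟩, by simp, by simp⟩
  · exact ⟨_, hnone ho, by simp, by simp⟩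

lemma isCompletion.proj_prefix {P C : History} (hC : isCompletion P C) (i : ℕ) :
    proj i P <+: proj i C := by
  obtain ⟨s, hs, -⟩ := hC.exists_proj_eq_append i
  exact hs ▸ List.prefix_append _ _

lemma isCompletion.getElem?_proj_eq_write {P C : History} {i t x v k : ℕ}
    (hC : isCompletion P C) (hk : (proj i C)[k]? = some (Event.inv t (Op.write x v))) :
    (proj i P)[k]? = some (Event.inv t (Op.write x v)) := by
  obtain ⟨s, hs, hsub, -⟩ := hC.exists_proj_eq_append i
  rw [hs] at hk
  exact List.getElem?_eq_some_of_append_of_not_mem hk fun h => by simpa using hsub h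

lemma isCompletion.write_mem {P C : History} {t x v : ℕ} (hC : isCompletion P C)
    (h : Event.inv t (Op.write x v) ∈ C) : Event.inv t (Op.write x v) ∈ P := by
  obtain ⟨k, hk⟩ := List.mem_iff_getElem?.mp (mem_proj.mpr ⟨h, rfl⟩)
  exact (mem_proj.mp (List.mem_of_getElem? (hC.getElem?_proj_eq_write hk))).1

lemma isCompletion.not_committed_of_getElem?_eq_inv {H C : History} {i n : ℕ} {o : Op}
    (hwf : wellFormedTxn (proj i H) i) (hC : isCompletion (H.take n) C)
    (hn : H[n]? = some (Event.inv i o)) : ¬ committed C i := by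
  obtain ⟨htc, hc⟩ := hwf.not_mem_of_append_inv_prefix (proj_take_append_prefix hn)
  obtain ⟨s, hs, -, hsc⟩ := hC.exists_proj_eq_append i
  intro h
  have hmem : Event.res i Resp.committed ∈ proj i C := h.subset (by simp)
  rw [hs, List.mem_append] at hmem
  exact hmem.elim hc fun h => htc (hsc h)

lemma equivH.mem {S C : History} {e : Event} (h : equivH S C) (he : e ∈ S) : e ∈ C :=
  (mem_proj.mp (h e.txn ▸ mem_proj.mpr ⟨he, rfl⟩)).1

lemma equivH.committed_iff {S C : History} (h : equivH S C) (i : ℕ) :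
    committed S i ↔ committed C i := by
  rw [committed, committed, h i]

lemma proj_Vis_self (S : History) (i : ℕ) : proj i (Vis S i) = proj i S := by
  simp only [proj, Vis, restrictTxns, List.filter_filter]
  refine List.filter_congr fun e _ => ?_
  by_cases h : e.txn = i <;> simp [h]

lemma mem_Vis {S : History} {i : ℕ} {e : Event} (he : e ∈ Vis S i) :
    e ∈ S ∧ (e.txn = i ∨ committed S e.txn ∧ rtPrec S e.txn i) := by
  simpa [Vis, restrictTxns] using he

lemma mem_seqOfIdx {L : History} {p : ℕ → Prop} {e : Event} :
    e ∈ seqOfIdx L p ↔ ∃ k, p k ∧ L[k]? = some e := by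
  simp only [seqOfIdx, List.mem_filterMap, List.mem_filter, List.mem_range, decide_eq_true_eq]
  exact ⟨fun ⟨k, ⟨_, hk⟩, he⟩ => ⟨k, hk, he⟩,
    fun ⟨k, hk, he⟩ => ⟨k, ⟨(List.getElem?_eq_some_iff.mp he).1, hk⟩, he⟩⟩

lemma lastUseProj_subset_proj (E : Set History) (Hd Hs : History) (i : ℕ) :
    lastUseProj E Hd Hs i ⊆ proj i Hs := fun _ he => by
  obtain ⟨k, -, hk⟩ := mem_seqOfIdx.mp he
  exact List.mem_of_getElem? hk

lemma txn_eq_of_mem_lastUseProjC {E : Set History} {Hd Hs : History} {i : ℕ} {e : Event}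
    (he : e ∈ lastUseProjC E Hd Hs i) : e.txn = i := by
  rcases List.mem_append.mp he with he | he
  · exact (mem_proj.mp (lastUseProj_subset_proj E Hd Hs i he)).2
  · rcases List.mem_pair.mp he with rfl | rfl <;> rfl

lemma mem_buildLUVis {E : Set History} {H S : History} {i : ℕ} {inc : ℕ → Prop} {e : Event}
    (he : e ∈ buildLUVis E H S i inc) :
    e ∈ S ∧ (e.txn = i ∨ committed S e.txn ∧ rtPrec S e.txn i) ∨
      e ∈ lastUseProjC E H S e.txn := by
  obtain ⟨t, -, he⟩ := List.mem_flatMap.mp he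
  split_ifs at he with h
  · obtain ⟨heS, rfl⟩ := mem_proj.mp he
    exact Or.inl ⟨heS, h⟩
  · exact Or.inr (txn_eq_of_mem_lastUseProjC he ▸ he)
  · simp at he

lemma proj_buildLUVis_self {E : Set History} {H S : History} {i : ℕ} (inc : ℕ → Prop)
    (hi : inTxn S i) : proj i (buildLUVis E H S i inc) = proj i S := by
  obtain ⟨e, he⟩ := List.exists_mem_of_ne_nil _ hi
  obtain ⟨heS, rfl⟩ := mem_proj.mp he
  rw [buildLUVis, proj, List.filter_flatMap,
    List.flatMap_eq_of_nodup (txnOrder_nodup S) (mem_txnOrder_of_mem heS), if_pos (Or.inl rfl)]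
  · exact List.filter_eq_self.mpr fun e' he' => by simpa using (mem_proj.mp he').2
  · intro t _ ht
    refine List.filter_eq_nil_iff.mpr fun e' he' => ?_
    split_ifs at he' with h
    · simpa [(mem_proj.mp he').2] using ht
    · simpa [txn_eq_of_mem_lastUseProjC he'] using ht
    · simp at he'

lemma not_decidedOn_of_write_after {E : Set History} {H P : History} {i x v m : ℕ}
    (hH : H ∈ E) (hP : P <+: H) (hm : P.length ≤ m)
    (hw : H[m]? = some (Event.inv i (Op.write x v))) : ¬ decidedOn E P i x := by
  rintro ⟨_, ki, kr, ⟨hkikr, -, hkr, -⟩, hclose⟩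
  have := hclose H hH hP m v hw
  have := (List.getElem?_eq_some_iff.mp hkr).1
  omega

lemma write_not_mem_lastUseProj {E : Set History} {H C S : History} {i x v v' n : ℕ}
    (hH : H ∈ E) (hwf : wellFormedTxn (proj i H) i) (hC : isCompletion (H.take n) C)
    (hSC : equivH S C) (hn : H[n]? = some (Event.inv i (Op.write x v'))) :
    Event.inv i (Op.write x v) ∉ lastUseProj E (H.take n) S i := by
  intro h
  obtain ⟨k, ⟨-, hk01 | ⟨x', hx', hdec⟩⟩, hk⟩ := mem_seqOfIdx.mp h
  · have hkP := hC.getElem?_proj_eq_write (hSC i ▸ hk)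
    have := hwf.two_le_of_getElem?_eq_write (((List.take_prefix n H).filter _).getElem?_eq_some hkP)
    omega
  · obtain rfl : x' = x := by simpa [eventVarAt, hk, opVar] using hx'.symm
    exact not_decidedOn_of_write_after hH (List.take_prefix n H)
      (List.length_take_le n H) hn hdec

theorem lastUse_opacity_does_not_support_overwriting_general
    (E : Set History) (H : History) (hH : H ∈ E)
    (hwf : wellFormed H) (huw : uniqueWrites H)
    (hlu : lastUseOpaque E H) :
    ∀ i j x : ℕ, ¬ overwriting H i j x := by
  rintro i j x ⟨hij, -, v, v', k1i, _, k2i, _, _, krr, hw1, hw2, -, hrd, hrk⟩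
  obtain ⟨C, S, hC, -, hSC, -, hcommleg, hncleg⟩ := hlu (H.take k2i) (List.take_prefix _ _)
  have hv : v ≠ 0 := (huw _ _ _ _ _ _ _ _ hw1.2.1 hw1.2.1).1
  have hread : [Event.inv j (Op.read x), Event.res j (Resp.value v)] <:+: proj j S :=
    hSC j ▸ (exists_opExec_iff_infix_proj.mp ⟨_, _, hrd.take hrk⟩).trans
      (hC.proj_prefix j).isInfix
  have hjS : inTxn S j := List.ne_nil_of_mem (hread.subset List.mem_cons_self)
  have hwriter : ∀ t, Event.inv t (Op.write x v) ∈ S → t = i := fun t ht =>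
    huw.txn_eq hw1.2.1 ((List.take_prefix _ _).subset (hC.write_mem (hSC.mem ht)))
  have hi : ¬ committed S i :=
    (hSC.committed_iff i).not.mpr (hC.not_committed_of_getElem?_eq_inv (hwf i) hw2.2.1)
  have hinvisible : ∀ t, Event.inv t (Op.write x v) ∈ S →
      ¬ (t = j ∨ committed S t ∧ rtPrec S t j) := by
    rintro t ht (rfl | ⟨htc, -⟩) <;> obtain rfl := hwriter t ht
    exacts [hij rfl, hi htc]
  by_cases hj : committed S j
  · obtain ⟨t, ht⟩ := (hcommleg j hjS hj).exists_write_of_read hv (by rwa [proj_Vis_self])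
    exact (mem_Vis ht).elim (hinvisible t)
  obtain ⟨inc, hleg⟩ := hncleg j hjS hj
  obtain ⟨t, ht⟩ := hleg.exists_write_of_read hv (by rwa [proj_buildLUVis_self inc hjS])
  rcases mem_buildLUVis ht with hvis | hluc
  · exact hvis.elim (hinvisible t)
  have hdecided : Event.inv t (Op.write x v) ∈ lastUseProj E (H.take k2i) S t :=
    (List.mem_append.mp hluc).resolve_right (by simp)
  obtain rfl := hwriter t (mem_proj.mp (lastUseProj_subset_proj _ _ _ _ hdecided)).1
  exact write_not_mem_lastUseProj hH (hwf t) hC hSC hw2.2.1 hdecided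

/-- Last-use opacity does not support overwriting: no
last-use opaque history contains a transaction that releases a variable `x`
early, writes to `x` twice, with another transaction reading the first value
before the second write. -/
theorem lastUse_opacity_does_not_support_overwriting
    (E : Set History) (hE : prefixClosed E) (H : History) (hH : H ∈ E)
    (hwf : wellFormed H) (huw : uniqueWrites H)
    (hlu : lastUseOpaque E H) :
    ∀ i j x : ℕ, ¬ overwriting H i j x :=
  lastUse_opacity_does_not_support_overwriting_general E H hH hwf huw hlu

end TM
end

section
/- Every final-state opaque history is final-state last-use opaque: for every prefix-closed set 𝓔 of histories and every finite H ∈ 𝓔, if H is final-state opaque, then H is final-state last-use opaque with respect to 𝓔. -/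
namespace TM

/-!
Take the witness `S` of final-state opacity and choose to include no decided
non-committed transaction in `LUVis(S,T_i)`. In a sequential `S` the events of each
transaction form one contiguous block, and the blocks appear in order of first
occurrence, so concatenating the selected blocks is the same as filtering `S`:
this `LUVis(S,T_i)` is `Vis(S,T_i)`, which is legal.
-/

open Classical

def TxnsContiguous (S : History) : Prop :=
  ∀ k l m : ℕ, k < l → l < m → ∀ ek el em : Event,
    S[k]? = some ek → S[l]? = some el → S[m]? = some em →
    ek.txn = em.txn → el.txn = ek.txn

lemma inTxn_of_mem {S : History} {e : Event} (h : e ∈ S) : inTxn S e.txn :=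
  List.ne_nil_of_mem (List.mem_filter.mpr ⟨h, by simp⟩)

lemma TxnsContiguous.of_sequential {S : History} (h : sequential S) : TxnsContiguous S := by
  intro k l m hkl hlm ek el em hk hl hm htxn
  by_contra hne
  rcases h ek.txn el.txn (inTxn_of_mem (List.mem_of_getElem? hk))
      (inTxn_of_mem (List.mem_of_getElem? hl)) (Ne.symm hne) with
    ⟨k', l', _, _, _, hlast, hfirst⟩ | ⟨k', l', _, _, _, hlast, hfirst⟩
  · have := hlast m em hm htxn.symm
    have := hfirst l el hl rfl
    omega
  · have := hlast l el hl rfl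
    have := hfirst k ek hk rfl
    omega

lemma TxnsContiguous.tail {e : Event} {t : History} (h : TxnsContiguous (e :: t)) :
    TxnsContiguous t := fun k l m hkl hlm ek el em hk hl hm =>
  h (k + 1) (l + 1) (m + 1) (by omega) (by omega) ek el em hk hl hm

lemma TxnsContiguous.head_cases {e : Event} {t : History} (h : TxnsContiguous (e :: t)) :
    (∀ e' ∈ t, e'.txn ≠ e.txn) ∨ ∃ e₁ t₁, t = e₁ :: t₁ ∧ e₁.txn = e.txn := by
  by_contra! hc
  obtain ⟨⟨e', he', he'txn⟩, hnext⟩ := hc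
  obtain ⟨m, hm⟩ := List.mem_iff_getElem?.mp he'
  obtain _ | ⟨e₁, t₁⟩ := t
  · simp at he'
  cases m with
  | zero => exact hnext e₁ t₁ rfl (by simp_all)
  | succ m =>
    exact hnext e₁ t₁ rfl
      (h 0 1 (m + 2) (by omega) (by omega) e e₁ e' rfl rfl hm he'txn.symm)

lemma exists_txn_eq_of_mem_txnOrder {S : History} {j : ℕ} (h : j ∈ txnOrder S) :
    ∃ e ∈ S, e.txn = j := by
  induction S with
  | nil => simp [txnOrder] at h
  | cons e t ih =>
    rcases List.mem_cons.mp h with rfl | h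
    · exact ⟨e, List.mem_cons_self, rfl⟩
    · obtain ⟨e', he', rfl⟩ := ih (List.mem_of_mem_filter h)
      exact ⟨e', List.mem_cons_of_mem e he', rfl⟩

lemma proj_cons (j : ℕ) (e : Event) (t : History) :
    proj j (e :: t) = if e.txn = j then e :: proj j t else proj j t := by
  by_cases h : e.txn = j <;> simp [proj, h]

lemma proj_eq_nil {S : History} {j : ℕ} (h : ∀ e ∈ S, e.txn ≠ j) : proj j S = [] :=
  List.filter_eq_nil_iff.mpr fun e he => by simpa using h e he

lemma flatMap_proj_txnOrder {S : History} (hS : TxnsContiguous S) :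
    (txnOrder S).flatMap (fun j => proj j S) = S := by
  induction S with
  | nil => rfl
  | cons e t ih =>
    set L' := (txnOrder t).filter (fun j => j ≠ e.txn)
    have hL' : L'.flatMap (fun j => proj j (e :: t)) = L'.flatMap (fun j => proj j t) :=
      List.flatMap_congr fun j hj => by
        rw [proj_cons, if_neg (Ne.symm (of_decide_eq_true (List.mem_filter.mp hj).2))]
    have hstep : (txnOrder (e :: t)).flatMap (fun j => proj j (e :: t)) =
        e :: (proj e.txn t ++ L'.flatMap (fun j => proj j t)) := by
      rw [txnOrder, List.flatMap_cons, proj_cons, if_pos rfl, hL', List.cons_append]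
    rw [hstep]
    congr 1
    conv_rhs => rw [← ih hS.tail]
    rcases hS.head_cases with hfresh | ⟨e₁, t₁, rfl, he₁⟩
    · have hL'eq : L' = txnOrder t := List.filter_eq_self.mpr fun j hj => by
        obtain ⟨e', he', rfl⟩ := exists_txn_eq_of_mem_txnOrder hj
        simpa using hfresh e' he'
      rw [proj_eq_nil hfresh, hL'eq, List.nil_append]
    · have htxn : txnOrder (e₁ :: t₁) = e.txn :: L' := by
        simp only [L', txnOrder, he₁, List.filter_cons, List.filter_filter]
        simp
      rw [htxn, List.flatMap_cons]

lemma filter_txn_eq_flatMap {S : History} (hS : TxnsContiguous S) (P : ℕ → Prop) :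
    S.filter (fun e => decide (P e.txn)) =
      (txnOrder S).flatMap (fun j => if P j then proj j S else []) := by
  conv_lhs => rw [← flatMap_proj_txnOrder hS]
  rw [List.filter_flatMap]
  refine List.flatMap_congr fun j _ => ?_
  have hproj : ∀ e ∈ proj j S, e.txn = j := fun e he => by
    simpa using (List.mem_filter.mp he).2
  split_ifs with hP
  · exact List.filter_eq_self.mpr fun e he => by simp [hproj e he, hP]
  · exact List.filter_eq_nil_iff.mpr fun e he => by simp [hproj e he, hP]

lemma buildLUVis_exclude_all_eq_Vis (E : Set History) (H : History) {S : History}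
    (hS : sequential S) (i : ℕ) : buildLUVis E H S i (fun _ => False) = Vis S i := by
  rw [Vis, restrictTxns, filter_txn_eq_flatMap (TxnsContiguous.of_sequential hS)]
  simp only [buildLUVis, and_false, if_false, Set.mem_ofPred_eq]
  exact List.flatMap_congr fun j _ => by split_ifs <;> rfl

theorem finalState_opaque_implies_finalState_lastUse_opaque_general
    (E : Set History) (H : History)
    (hfso : finalStateOpaque H) : finalStateLUOpaque E H := by
  obtain ⟨C, S, hC, hseq, hequiv, hrt, hleg⟩ := hfso
  refine ⟨C, S, hC, hseq, hequiv, hrt, fun i hi _ => hleg i hi,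
    fun i hi _ => ⟨fun _ => False, ?_⟩⟩
  rw [buildLUVis_exclude_all_eq_Vis E H hseq i]
  exact hleg i hi

/-- Every final-state opaque history is final-state
last-use opaque: for every prefix-closed `E` and every finite `H ∈ E`, if `H`
is final-state opaque then `H` is final-state last-use opaque w.r.t. `E`. -/
theorem finalState_opaque_implies_finalState_lastUse_opaque
    (E : Set History) (hE : prefixClosed E) (H : History) (hH : H ∈ E)
    (hfso : finalStateOpaque H) : finalStateLUOpaque E H :=
  finalState_opaque_implies_finalState_lastUse_opaque_general E H hfso

end TM
end
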